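/- arXiv:2510.01941 — 6 statements merged into one kernel-verified Lean document; each statement's English description precedes it below -/
import Mathlib

section
/- Suppose coefficients a(n, k) ∈ [0,1] (for 0 ≤ k ≤ n) satisfy a(n, k) ≥ Σ_{i=0}^{k} [C(n-m, k-i)·C(m, i)/C(n, k)]·a(m, i) for all m ≤ n. Define H_n(m, k) = Σ_{i=0}^{k} [C(n-m, k-i)·C(m, i)/C(n, k)]·a(m, i). Then for all 1 ≤ m ≤ n and 0 ≤ k ≤ n, H_n(m, k) - H_n(m-1, k) ≥ 0. -/
open Finset

/-- Hypergeometric average `H_n(m, k)` of coefficients `a(m, ·)`. -/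
noncomputable def Hyp (a : ℕ → ℕ → ℝ) (n m k : ℕ) : ℝ :=
  ∑ i ∈ range (k + 1),
    ((Nat.choose (n - m) (k - i) * Nat.choose m i : ℕ) : ℝ) / (Nat.choose n k : ℝ) * a m i

/-- Composition of hypergeometric averages. -/
lemma hyp_comp (a : ℕ → ℕ → ℝ) (n m k : ℕ) (hm : 1 ≤ m) (hmn : m ≤ n) (hk : k ≤ n) :
    Hyp a n (m - 1) k = ∑ i ∈ range (k + 1),
      ((Nat.choose (n - m) (k - i) * Nat.choose m i : ℕ) : ℝ) / (Nat.choose n k : ℝ)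
        * Hyp a m (m - 1) i := by
  have h1 : m - (m - 1) = 1 := by omega
  have h2 : n - (m - 1) = n - m + 1 := by omega
  have hnk : (0:ℝ) < (Nat.choose n k : ℝ) := by exact_mod_cast Nat.choose_pos hk
  unfold Hyp
  rw [h1, h2]
  -- the double sum, over a square index set, with an `if` for the triangle
  set T : ℕ → ℕ → ℝ := fun i j => if j ≤ i then
        ((Nat.choose (n - m) (k - i) * Nat.choose m i : ℕ) : ℝ) / (Nat.choose n k : ℝ)
          * (((Nat.choose 1 (i - j) * Nat.choose (m - 1) j : ℕ) : ℝ) / (Nat.choose m i : ℝ)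
              * a (m - 1) j) else 0 with hT
  have step1 : ∀ i ∈ range (k + 1),
      ((Nat.choose (n - m) (k - i) * Nat.choose m i : ℕ) : ℝ) / (Nat.choose n k : ℝ)
        * ∑ j ∈ range (i + 1),
            ((Nat.choose 1 (i - j) * Nat.choose (m - 1) j : ℕ) : ℝ) / (Nat.choose m i : ℝ)
              * a (m - 1) j
    = ∑ j ∈ range (k + 1), T i j := by
    intro i hi
    simp only [mem_range] at hi
    rw [Finset.mul_sum]
    have hsub : range (i + 1) ⊆ range (k + 1) := Finset.range_subset_range.mpr (by omega)
    rw [← Finset.sum_subset hsub (fun j hj hji => by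
      simp only [mem_range] at hj hji
      simp only [hT]
      exact if_neg (by omega))]
    refine Finset.sum_congr rfl fun j hj => ?_
    simp only [mem_range] at hj
    simp only [hT]
    rw [if_pos (by omega)]
  have step2 : ∀ j ∈ range (k + 1),
      ∑ i ∈ range (k + 1), T i j
    = ((Nat.choose (n - m + 1) (k - j) * Nat.choose (m - 1) j : ℕ) : ℝ)
        / (Nat.choose n k : ℝ) * a (m - 1) j := by
    intro j hj
    simp only [mem_range] at hj
    have hzero : ∀ i ∈ range (k + 1), i ∉ (if j < k then ({j, j+1} : Finset ℕ) else {j})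
        → T i j = 0 := by
      intro i hi his
      simp only [hT]
      by_cases hji : j ≤ i
      · simp only [mem_range] at hi
        have hii : 2 ≤ i - j := by
          split_ifs at his with h
          · simp only [Finset.mem_insert, Finset.mem_singleton] at his; omega
          · simp only [Finset.mem_singleton] at his; omega
        have hc : Nat.choose 1 (i - j) = 0 := Nat.choose_eq_zero_of_lt (by omega)
        rw [if_pos hji, hc]
        push_cast
        ring
      · exact if_neg hji
    have hsub : (if j < k then ({j, j+1} : Finset ℕ) else {j}) ⊆ range (k + 1) := by
      split_ifs with h
      · intro x hx; simp only [Finset.mem_insert, Finset.mem_singleton] at hx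
        simp only [mem_range]; omega
      · intro x hx; simp only [Finset.mem_singleton] at hx; simp only [mem_range]; omega
    rw [← Finset.sum_subset hsub hzero]
    by_cases hjk : j < k
    · rw [if_pos hjk, Finset.sum_pair (by omega : j ≠ j + 1)]
      simp only [hT]
      rw [if_pos (le_refl j), if_pos (by omega : j ≤ j + 1)]
      simp only [Nat.sub_self, Nat.add_sub_cancel_left, Nat.choose_zero_right,
        Nat.choose_one_right]
      obtain ⟨t, ht⟩ : ∃ t, k - j = t + 1 := ⟨k - j - 1, by omega⟩
      have ht2 : k - (j + 1) = t := by omega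
      have hp : Nat.choose (n - m + 1) (t + 1)
          = Nat.choose (n - m) t + Nat.choose (n - m) (t + 1) :=
        Nat.choose_succ_succ _ _
      rw [ht, ht2, hp]
      by_cases hjm : j + 1 ≤ m
      · have c1 : (0:ℝ) < (Nat.choose m j : ℝ) := by
          exact_mod_cast Nat.choose_pos (by omega)
        have c2 : (0:ℝ) < (Nat.choose m (j+1) : ℝ) := by
          exact_mod_cast Nat.choose_pos hjm
        push_cast
        field_simp
        ring
      · have hz : Nat.choose (m - 1) j = 0 := Nat.choose_eq_zero_of_lt (by omega)
        rw [hz]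
        push_cast
        ring
    · have hjk' : j = k := by omega
      rw [if_neg hjk, Finset.sum_singleton]
      simp only [hT]
      rw [if_pos (le_refl j)]
      simp only [Nat.sub_self, Nat.choose_zero_right, hjk']
      by_cases hkm : k ≤ m
      · have c1 : (0:ℝ) < (Nat.choose m k : ℝ) := by exact_mod_cast Nat.choose_pos hkm
        push_cast
        field_simp
      · have hz : Nat.choose (m - 1) k = 0 := Nat.choose_eq_zero_of_lt (by omega)
        rw [hz]
        push_cast
        ring
  calc ∑ j ∈ range (k + 1),
        ((Nat.choose (n - m + 1) (k - j) * Nat.choose (m - 1) j : ℕ) : ℝ)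
          / (Nat.choose n k : ℝ) * a (m - 1) j
      = ∑ j ∈ range (k + 1), ∑ i ∈ range (k + 1), T i j :=
        (Finset.sum_congr rfl step2).symm
    _ = ∑ i ∈ range (k + 1), ∑ j ∈ range (k + 1), T i j := Finset.sum_comm
    _ = _ := (Finset.sum_congr rfl step1).symm

theorem stmt3 (a : ℕ → ℕ → ℝ)
    (hrange : ∀ n k, k ≤ n → a n k ∈ Set.Icc (0 : ℝ) 1)
    (hcons : ∀ m n k, m ≤ n → k ≤ n → Hyp a n m k ≤ a n k) :
    ∀ m n k, 1 ≤ m → m ≤ n → k ≤ n →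
      0 ≤ Hyp a n m k - Hyp a n (m - 1) k := by
  intro m n k hm hmn hk
  rw [sub_nonneg, hyp_comp a n m k hm hmn hk]
  apply Finset.sum_le_sum
  intro i hi
  by_cases him : i ≤ m
  · refine mul_le_mul_of_nonneg_left (hcons (m-1) m i (Nat.sub_le m 1) him) ?_
    positivity
  · have h0 : Nat.choose m i = 0 := Nat.choose_eq_zero_of_lt (by omega)
    simp [h0]
end

section
/- Suppose coefficients a(n, k), b(n, k) with 0 ≤ a(n,k) ≤ b(n,k) ≤ 1 satisfy a(n, k) ≥ Σ_{i=0}^{k} [C(n-m, k-i)·C(m, i)/C(n, k)]·a(m, i) and b(n, k) ≤ Σ_{i=0}^{k} [C(n-m, k-i)·C(m, i)/C(n, k)]·b(m, i) for all m ≤ n. With H_n(m, k) = Σ_{i=0}^{k} [C(n-m, k-i)·C(m, i)/C(n, k)]·a(m, i), one has for all 1 ≤ m ≤ n: H_n(m, k) - H_n(m-1, k) ≤ Σ_{i=0}^{k} [C(n-m+1, k-i)·C(m-1, i)/C(n, k)]·(b(m-1, i) - a(m-1, i)). -/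
open Finset

lemma vand (p k j : ℕ) (hj : j ≤ k) :
    ∑ i ∈ range (k + 1), (if j ≤ i then Nat.choose p (k - i) * Nat.choose 1 (i - j) else 0)
      = Nat.choose (p + 1) (k - j) := by
  rw [← Finset.sum_filter]
  have hf : (range (k + 1)).filter (fun i => j ≤ i) = Finset.Ico j (k + 1) := by
    ext x; simp [Nat.lt_succ_iff, and_comm]
  rw [hf, Finset.sum_Ico_eq_sum_range]
  have h1 : k + 1 - j = (k - j) + 1 := by omega
  rw [h1]
  have h2 : ∀ t, k - (j + t) = (k - j) - t := by omega
  simp only [h2, Nat.add_sub_cancel_left]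
  set s := k - j with hs
  clear_value s
  cases s with
  | zero => simp
  | succ s' =>
    rw [Finset.sum_range_succ', Finset.sum_range_succ']
    have : ∀ t ∈ range s', Nat.choose p (s' + 1 - (t + 1 + 1)) * Nat.choose 1 (t + 1 + 1) = 0 := by
      intro t _; simp [Nat.choose_eq_zero_of_lt]
    rw [Finset.sum_eq_zero this]
    simp [Nat.choose_succ_succ' p s']

theorem stmt4 (a b : ℕ → ℕ → ℝ)
    (hrange : ∀ n k, k ≤ n → 0 ≤ a n k ∧ a n k ≤ b n k ∧ b n k ≤ 1)
    (hconsA : ∀ m n k, m ≤ n → k ≤ n → Hyp a n m k ≤ a n k)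
    (hconsB : ∀ m n k, m ≤ n → k ≤ n → b n k ≤ Hyp b n m k) :
    ∀ m n k, 1 ≤ m → m ≤ n → k ≤ n →
      Hyp a n m k - Hyp a n (m - 1) k
        ≤ ∑ i ∈ range (k + 1),
            ((Nat.choose (n - m + 1) (k - i) * Nat.choose (m - 1) i : ℕ) : ℝ)
              / (Nat.choose n k : ℝ) * (b (m - 1) i - a (m - 1) i) := by
  intro m n k hm1 hmn hkn
  have hnk : (0 : ℝ) < (Nat.choose n k : ℝ) := by
    exact_mod_cast Nat.choose_pos hkn
  -- Step A : Hyp a n m k ≤ ∑ c' i * Hyp b m (m-1) i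
  have stepA : Hyp a n m k ≤ ∑ i ∈ range (k + 1),
      ((Nat.choose (n - m) (k - i) * Nat.choose m i : ℕ) : ℝ) / (Nat.choose n k : ℝ)
        * Hyp b m (m - 1) i := by
    unfold Hyp
    apply Finset.sum_le_sum
    intro i _
    by_cases hi : i ≤ m
    · apply mul_le_mul_of_nonneg_left _ (by positivity)
      calc a m i ≤ b m i := (hrange m i hi).2.1
        _ ≤ ∑ i_1 ∈ range (i + 1),
              ((Nat.choose (m - (m - 1)) (i - i_1) * Nat.choose (m - 1) i_1 : ℕ) : ℝ)
                / (Nat.choose m i : ℝ) * b (m - 1) i_1 := hconsB (m - 1) m i (Nat.sub_le m 1) hi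
    · have : Nat.choose m i = 0 := Nat.choose_eq_zero_of_lt (by omega)
      simp [this]
  -- Step B : the double sum rearranges
  have hm2 : m - (m - 1) = 1 := by omega
  have stepB : (∑ i ∈ range (k + 1),
      ((Nat.choose (n - m) (k - i) * Nat.choose m i : ℕ) : ℝ) / (Nat.choose n k : ℝ)
        * Hyp b m (m - 1) i)
      = ∑ j ∈ range (k + 1),
          ((Nat.choose (n - m + 1) (k - j) * Nat.choose (m - 1) j : ℕ) : ℝ)
            / (Nat.choose n k : ℝ) * b (m - 1) j := by
    have key : ∀ i ∈ range (k + 1),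
        ((Nat.choose (n - m) (k - i) * Nat.choose m i : ℕ) : ℝ) / (Nat.choose n k : ℝ)
          * Hyp b m (m - 1) i
        = ∑ j ∈ range (k + 1), (if j ≤ i then
            ((Nat.choose (n - m) (k - i) * Nat.choose 1 (i - j) * Nat.choose (m - 1) j : ℕ) : ℝ)
              / (Nat.choose n k : ℝ) * b (m - 1) j else 0) := by
      intro i hik
      rw [Finset.mem_range, Nat.lt_succ_iff] at hik
      by_cases hi : i ≤ m
      · have hmi : (0 : ℝ) < (Nat.choose m i : ℝ) := by exact_mod_cast Nat.choose_pos hi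
        unfold Hyp
        rw [hm2, Finset.mul_sum]
        have hset : ∀ j ∈ range (k+1), (if j ≤ i then
            ((Nat.choose (n - m) (k - i) * Nat.choose 1 (i - j) * Nat.choose (m - 1) j : ℕ) : ℝ)
              / (Nat.choose n k : ℝ) * b (m - 1) j else 0)
            = (if j ∈ range (i+1) then
            ((Nat.choose (n - m) (k - i) * Nat.choose 1 (i - j) * Nat.choose (m - 1) j : ℕ) : ℝ)
              / (Nat.choose n k : ℝ) * b (m - 1) j else 0) := by
          intro j _; simp [Nat.lt_succ_iff]
        rw [Finset.sum_congr rfl hset, Finset.sum_ite_mem]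
        have hinter : range (k+1) ∩ range (i+1) = range (i+1) := by
          rw [Finset.inter_eq_right]
          exact Finset.range_subset_range.mpr (by omega)
        rw [hinter]
        apply Finset.sum_congr rfl
        intro j _
        push_cast
        field_simp
      · have hz : Nat.choose m i = 0 := Nat.choose_eq_zero_of_lt (by omega)
        rw [hz]
        rw [Finset.sum_eq_zero]
        · simp
        · intro j _
          split_ifs with hji
          · by_cases h2 : i - j ≤ 1
            · have : Nat.choose (m-1) j = 0 := Nat.choose_eq_zero_of_lt (by omega)
              simp [this]
            · have : Nat.choose 1 (i - j) = 0 := Nat.choose_eq_zero_of_lt (by omega)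
              simp [this]
          · rfl
    rw [Finset.sum_congr rfl key, Finset.sum_comm]
    apply Finset.sum_congr rfl
    intro j hj
    rw [Finset.mem_range, Nat.lt_succ_iff] at hj
    have pull : ∀ i ∈ range (k+1), (if j ≤ i then
        ((Nat.choose (n - m) (k - i) * Nat.choose 1 (i - j) * Nat.choose (m - 1) j : ℕ) : ℝ)
          / (Nat.choose n k : ℝ) * b (m - 1) j else 0)
        = ((if j ≤ i then (Nat.choose (n - m) (k - i) * Nat.choose 1 (i - j) : ℕ) else 0 : ℕ) : ℝ)
          * (((Nat.choose (m - 1) j : ℕ) : ℝ) / (Nat.choose n k : ℝ) * b (m - 1) j) := by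
      intro i _
      split_ifs
      · push_cast; ring
      · simp
    rw [Finset.sum_congr rfl pull, ← Finset.sum_mul, ← Nat.cast_sum, vand (n - m) k j hj]
    push_cast
    ring
  -- Step C : rewrite the target RHS and Hyp a n (m-1) k
  have hnm : n - (m - 1) = n - m + 1 := by omega
  have hRHS : (∑ i ∈ range (k + 1),
      ((Nat.choose (n - m + 1) (k - i) * Nat.choose (m - 1) i : ℕ) : ℝ)
        / (Nat.choose n k : ℝ) * (b (m - 1) i - a (m - 1) i))
      = (∑ j ∈ range (k + 1),
          ((Nat.choose (n - m + 1) (k - j) * Nat.choose (m - 1) j : ℕ) : ℝ)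
            / (Nat.choose n k : ℝ) * b (m - 1) j) - Hyp a n (m - 1) k := by
    unfold Hyp
    rw [hnm, ← Finset.sum_sub_distrib]
    apply Finset.sum_congr rfl
    intro j _
    ring
  rw [hRHS]
  have := stepA.trans_eq stepB
  linarith
end

section
/- Let a(n, k) ≤ b(n, k) be coefficients in [0,1] and define g_n(x) = Σ_{k=0}^{n} C(n,k)·a(n,k)·x^k(1−x)^{n−k} and h_n(x) = Σ_{k=0}^{n} C(n,k)·b(n,k)·x^k(1−x)^{n−k}. If h_n(x) − g_n(x) ≤ C·n^(−ρ/2) for all x ∈ [0,1], then for all 1 ≤ k ≤ n−1, b(n,k) − a(n,k) ≤ C·√(π/2)·e²·n^((1−ρ)/2), and b(n,0) − a(n,0) ≤ C·n^(−ρ/2), b(n,n) − a(n,n) ≤ C·n^(−ρ/2). -/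
/-!
All Bernstein terms of `h_n - g_n` are nonnegative, so each single term is at most `C n^(-ρ/2)`.
At `x = 0` and `x = 1` the surviving term is `b(n,0) - a(n,0)`, resp. `b(n,n) - a(n,n)`. For
`0 < k < n` evaluate at `x = k/n`: the Stirling bounds `√(2πn) (n/e)^n ≤ n!` and
`k! ≤ e √k (k/e)^k` make the powers of `e` and of `k, n - k, n` cancel, leaving
`C(n,k) (k/n)^k (1 - k/n)^(n-k) ≥ √(2πn) / (e² √(k(n-k))) ≥ √(2/(πn)) / e²`.
-/

open Real Finset
open scoped Nat

theorem Nat.factorial_le_exp_one_mul_sqrt_mul_pow {n : ℕ} (hn : n ≠ 0) :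
    (n ! : ℝ) ≤ exp 1 * √n * (n / exp 1) ^ n := by
  have hseq : Stirling.stirlingSeq n ≤ exp 1 / √2 := by
    obtain ⟨m, rfl⟩ := Nat.exists_eq_succ_of_ne_zero hn
    simpa [Stirling.stirlingSeq_one] using Stirling.stirlingSeq'_antitone (Nat.zero_le m)
  have hfac : (n ! : ℝ) = Stirling.stirlingSeq n * (√(2 * n) * (n / exp 1) ^ n) := by
    rw [Stirling.stirlingSeq, div_mul_cancel₀]
    positivity
  calc (n ! : ℝ) ≤ exp 1 / √2 * (√(2 * n) * (n / exp 1) ^ n) := by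
        rw [hfac]; gcongr
    _ = exp 1 * √n * (n / exp 1) ^ n := by
        rw [sqrt_mul zero_le_two]; field_simp

theorem sqrt_two_pi_mul_div_le_choose_mul_pow_mul_pow {k m : ℕ} (hk : k ≠ 0) (hm : m ≠ 0) :
    √(2 * π * (k + m : ℕ)) / (exp 2 * √(k * m)) ≤
      ((k + m).choose k : ℝ) * (k / (k + m : ℕ)) ^ k * (m / (k + m : ℕ)) ^ m := by
  set n := k + m
  have hn : (n : ℝ) ≠ 0 := by positivity
  have hpow : ((k : ℝ) / exp 1) ^ k * (m / exp 1) ^ m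
      = (n / exp 1) ^ n * ((k / n) ^ k * (m / n) ^ m) := by
    have hdiv (j : ℕ) : (n / exp 1) * (j / n) = j / exp 1 := by field_simp
    rw [pow_add, ← hdiv k, ← hdiv m]
    ring
  have hchoose : (n.choose k : ℝ) = n ! / (k ! * m !) := by
    rw [Nat.cast_choose ℝ (Nat.le_add_right k m), Nat.add_sub_cancel_left]
  have hkm : (k ! * m ! : ℝ) ≤ exp 2 * √(k * m) * ((k / exp 1) ^ k * (m / exp 1) ^ m) := by
    calc (k ! * m ! : ℝ) ≤ (exp 1 * √k * (k / exp 1) ^ k) * (exp 1 * √m * (m / exp 1) ^ m) := by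
          gcongr
          · exact Nat.factorial_le_exp_one_mul_sqrt_mul_pow hk
          · exact Nat.factorial_le_exp_one_mul_sqrt_mul_pow hm
      _ = _ := by
          rw [sqrt_mul (Nat.cast_nonneg k), show (2 : ℝ) = 1 + 1 by norm_num, exp_add]
          ring
  calc √(2 * π * n) / (exp 2 * √(k * m))
      = √(2 * π * n) * (n / exp 1) ^ n * ((k / n) ^ k * (m / n) ^ m)
          / (exp 2 * √(k * m) * ((k / exp 1) ^ k * (m / exp 1) ^ m)) := by
        rw [hpow]
        field_simp
    _ ≤ n ! * ((k / n) ^ k * (m / n) ^ m) / (k ! * m !) := by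
        gcongr
        exact Stirling.le_factorial_stirling n
    _ = _ := by rw [hchoose]; ring

theorem sqrt_two_div_pi_mul_div_exp_two_le_choose_mul_pow_mul_one_sub_pow {n k : ℕ}
    (hk : 0 < k) (hkn : k < n) :
    √(2 / (π * n)) / exp 2 ≤ (n.choose k : ℝ) * (k / n) ^ k * (1 - k / n) ^ (n - k) := by
  obtain ⟨m, rfl⟩ := Nat.exists_eq_add_of_lt hkn
  have hm : m + 1 ≠ 0 := by omega
  have hn : ((k + (m + 1) : ℕ) : ℝ) ≠ 0 := by positivity
  have hsub : 1 - (k : ℝ) / (k + m + 1 : ℕ) = (m + 1 : ℕ) / (k + (m + 1) : ℕ) := by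
    field_simp; push_cast; ring
  rw [hsub, show k + m + 1 - k = m + 1 by omega, show k + m + 1 = k + (m + 1) by ring]
  refine le_trans ?_ (sqrt_two_pi_mul_div_le_choose_mul_pow_mul_pow hk.ne' hm)
  set N : ℝ := ((k + (m + 1) : ℕ) : ℝ)
  set M : ℝ := ((m + 1 : ℕ) : ℝ)
  have hkM : (k : ℝ) * M ≤ N ^ 2 := by
    have hN : N = k + M := by simp [N, M]
    rw [hN]
    nlinarith [sq_nonneg ((k : ℝ) + M / 2), sq_nonneg M]
  have hroot : √(2 / (π * N)) * √(k * M) ≤ √(2 * π * N) := by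
    rw [← sqrt_mul (by positivity)]
    apply Real.sqrt_le_sqrt
    rw [div_mul_eq_mul_div, div_le_iff₀ (by positivity)]
    have hπ : 1 ≤ π ^ 2 := by nlinarith [pi_gt_three]
    nlinarith [mul_le_mul_of_nonneg_right hπ (sq_nonneg N)]
  rw [div_le_div_iff₀ (by positivity) (by positivity)]
  calc √(2 / (π * N)) * (exp 2 * √(k * M)) = √(2 / (π * N)) * √(k * M) * exp 2 := by ring
    _ ≤ √(2 * π * N) * exp 2 := by gcongr

theorem choose_mul_mul_pow_mul_one_sub_pow_le_sum {n j : ℕ} (hj : j ≤ n) (d : ℕ → ℝ)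
    (hd : ∀ k ≤ n, 0 ≤ d k) {x : ℝ} (hx : x ∈ Set.Icc (0 : ℝ) 1) :
    (n.choose j : ℝ) * d j * x ^ j * (1 - x) ^ (n - j) ≤
      ∑ k ∈ range (n + 1), (n.choose k : ℝ) * d k * x ^ k * (1 - x) ^ (n - k) := by
  refine single_le_sum (f := fun k ↦ (n.choose k : ℝ) * d k * x ^ k * (1 - x) ^ (n - k))
    (fun k hk ↦ ?_) (mem_range_succ_iff.mpr hj)
  have := hd k (mem_range_succ_iff.mp hk)
  have := sub_nonneg.mpr hx.2
  have := hx.1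
  positivity

theorem stmt7_general (n : ℕ) (a b : ℕ → ℝ) (C ρ : ℝ)
    (hcoef : ∀ k ≤ n, 0 ≤ a k ∧ a k ≤ b k ∧ b k ≤ 1)
    (happrox : ∀ x ∈ Set.Icc (0 : ℝ) 1,
      (∑ k ∈ range (n + 1), (Nat.choose n k : ℝ) * b k * x ^ k * (1 - x) ^ (n - k))
        - (∑ k ∈ range (n + 1), (Nat.choose n k : ℝ) * a k * x ^ k * (1 - x) ^ (n - k))
        ≤ C * (n : ℝ) ^ (-ρ / 2)) :
    (∀ k, 1 ≤ k → k ≤ n - 1 →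
        b k - a k ≤ C * Real.sqrt (π / 2) * Real.exp 2 * (n : ℝ) ^ ((1 - ρ) / 2)) ∧
      b 0 - a 0 ≤ C * (n : ℝ) ^ (-ρ / 2) ∧
      b n - a n ≤ C * (n : ℝ) ^ (-ρ / 2) := by
  have hterm : ∀ j ≤ n, ∀ x ∈ Set.Icc (0 : ℝ) 1,
      (n.choose j : ℝ) * (b j - a j) * x ^ j * (1 - x) ^ (n - j) ≤ C * (n : ℝ) ^ (-ρ / 2) := by
    intro j hj x hx
    refine (choose_mul_mul_pow_mul_one_sub_pow_le_sum hj (fun k ↦ b k - a k)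
      (fun k hk ↦ sub_nonneg.mpr (hcoef k hk).2.1) hx).trans (le_of_eq_of_le ?_ (happrox x hx))
    rw [← sum_sub_distrib]
    exact sum_congr rfl fun k _ ↦ by ring
  refine ⟨fun k hk hkn ↦ ?_, by simpa using hterm 0 n.zero_le 0 (by simp),
    by simpa using hterm n le_rfl 1 (by simp)⟩
  have hkn : k < n := by omega
  have hn : (0 : ℝ) < n := Nat.cast_pos.mpr (by omega)
  have hx : (k : ℝ) / n ∈ Set.Icc (0 : ℝ) 1 :=
    ⟨by positivity, div_le_one_of_le₀ (by exact_mod_cast hkn.le) hn.le⟩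
  have hlower := sqrt_two_div_pi_mul_div_exp_two_le_choose_mul_pow_mul_one_sub_pow hk hkn
  have hupper := hterm k hkn.le _ hx
  have hgap : b k - a k ≤ C * (n : ℝ) ^ (-ρ / 2) / (√(2 / (π * n)) / exp 2) := by
    rw [le_div_iff₀ (by positivity)]
    calc (b k - a k) * (√(2 / (π * n)) / exp 2)
        ≤ (b k - a k) * ((n.choose k : ℝ) * (k / n) ^ k * (1 - k / n) ^ (n - k)) :=
          mul_le_mul_of_nonneg_left hlower (sub_nonneg.mpr (hcoef k hkn.le).2.1)
      _ ≤ C * (n : ℝ) ^ (-ρ / 2) := le_of_eq_of_le (by ring) hupper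
  refine hgap.trans_eq ?_
  rw [show (1 - ρ) / 2 = 1 / 2 + -ρ / 2 by ring, rpow_add hn, ← sqrt_eq_rpow,
    sqrt_div' _ (by positivity), sqrt_div' _ zero_le_two, sqrt_mul pi_pos.le]
  field_simp

theorem stmt7 (n : ℕ) (hn : 1 ≤ n) (a b : ℕ → ℝ) (C ρ : ℝ) (hC : 0 < C) (hρ : 0 < ρ)
    (hcoef : ∀ k ≤ n, 0 ≤ a k ∧ a k ≤ b k ∧ b k ≤ 1)
    (happrox : ∀ x ∈ Set.Icc (0 : ℝ) 1,
      (∑ k ∈ range (n + 1), (Nat.choose n k : ℝ) * b k * x ^ k * (1 - x) ^ (n - k))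
        - (∑ k ∈ range (n + 1), (Nat.choose n k : ℝ) * a k * x ^ k * (1 - x) ^ (n - k))
        ≤ C * (n : ℝ) ^ (-ρ / 2)) :
    (∀ k, 1 ≤ k → k ≤ n - 1 →
        b k - a k ≤ C * Real.sqrt (π / 2) * Real.exp 2 * (n : ℝ) ^ ((1 - ρ) / 2)) ∧
      b 0 - a 0 ≤ C * (n : ℝ) ^ (-ρ / 2) ∧
      b n - a n ≤ C * (n : ℝ) ^ (-ρ / 2) :=
  stmt7_general n a b C ρ hcoef happrox
end

section
/- Let λ > 1 and ρ > 2λ + 1, and let ζ(λ, n) = Σ_{j=0}^{∞}(j+n)^(−λ). Then the series Σ_{n=k}^{∞} n^((1−ρ)/2)/ζ(λ, n) converges, and moreover ζ(λ, k)·Σ_{n=k}^{∞} n^((1−ρ)/2)/ζ(λ, n) = O(k^((3−ρ)/2)) as k → ∞. -/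
/-!
By the integral test, `k ^ (1 - μ) / (μ - 1) ≤ ζ(μ, k) ≤ μ / (μ - 1) * k ^ (1 - μ)` for
`μ > 1` and `k ≥ 1`.
The lower bound for `μ = λ` dominates each term `n ^ s / ζ(λ, n)` by `(λ - 1) n ^ (-ν)` with
`ν = 1 - λ - s`, which exceeds `1` for `s = (1 - ρ) / 2`; so the tail from `k` is at most
`(λ - 1) ζ(ν, k) = O(k ^ (s + λ))`, and multiplying by `ζ(λ, k) = O(k ^ (1 - λ))` gives
`O(k ^ (1 + s))`.
-/

open Filter Asymptotics

/-- Generalised Riemann (Hurwitz) zeta function `ζ(λ, n) = Σ_{j≥0} (j+n)^(−λ)`. -/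
noncomputable def hzeta (lam : ℝ) (n : ℕ) : ℝ := ∑' j : ℕ, ((j + n : ℕ) : ℝ) ^ (-lam)

open MeasureTheory Set

section
variable {μ : ℝ}

lemma summable_hzeta_summand (hμ : 1 < μ) (k : ℕ) :
    Summable fun j : ℕ => ((j + k : ℕ) : ℝ) ^ (-μ) :=
  (summable_nat_add_iff k).2 (Real.summable_nat_rpow.2 (by linarith))

lemma hzeta_nonneg (k : ℕ) : 0 ≤ hzeta μ k :=
  tsum_nonneg fun _ => by positivity

lemma integral_Ioi_rpow_neg (hμ : 1 < μ) {c : ℝ} (hc : 0 < c) :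
    ∫ t in Ioi c, t ^ (-μ) = c ^ (1 - μ) / (μ - 1) := by
  rw [integral_Ioi_rpow_of_lt (by linarith) hc, neg_div, ← div_neg]
  ring_nf

lemma antitoneOn_rpow_neg (hμ : 0 ≤ μ) {c : ℝ} (hc : 0 < c) :
    AntitoneOn (fun t : ℝ => t ^ (-μ)) (Ici c) := fun _ hx _ _ hxy =>
  Real.rpow_le_rpow_of_nonpos (hc.trans_le hx) hxy (by linarith)

lemma hzeta_succ_le (hμ : 1 < μ) {k : ℕ} (hk : 0 < k) :
    hzeta μ (k + 1) ≤ (k : ℝ) ^ (1 - μ) / (μ - 1) := by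
  have hk' : (0 : ℝ) < k := by exact_mod_cast hk
  refine Real.tsum_le_of_sum_range_le (fun _ => by positivity) fun N => ?_
  calc ∑ j ∈ Finset.range N, ((j + (k + 1) : ℕ) : ℝ) ^ (-μ)
      ≤ ∫ t in (k : ℝ)..k + N, t ^ (-μ) := by
        convert ((antitoneOn_rpow_neg (by linarith) hk').mono
          Icc_subset_Ici_self).sum_le_integral using 3 with j
        push_cast; ring
    _ ≤ ∫ t in Ioi (k : ℝ), t ^ (-μ) := by
        rw [intervalIntegral.integral_of_le (le_add_of_nonneg_right N.cast_nonneg)]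
        exact setIntegral_mono_set (integrableOn_Ioi_rpow_of_lt (by linarith) hk')
          (ae_restrict_of_forall_mem measurableSet_Ioi fun t ht =>
            Real.rpow_nonneg (hk'.trans ht).le _)
          Ioc_subset_Ioi_self.eventuallyLE
    _ = (k : ℝ) ^ (1 - μ) / (μ - 1) := integral_Ioi_rpow_neg hμ hk'

lemma rpow_div_le_hzeta (hμ : 1 < μ) {k : ℕ} (hk : 0 < k) :
    (k : ℝ) ^ (1 - μ) / (μ - 1) ≤ hzeta μ k := by
  have hk' : (0 : ℝ) < k := by exact_mod_cast hk
  rw [← integral_Ioi_rpow_neg hμ hk']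
  refine le_of_tendsto' (intervalIntegral_tendsto_integral_Ioi _
    (integrableOn_Ioi_rpow_of_lt (by linarith) hk')
    (tendsto_atTop_add_const_left _ (k : ℝ) tendsto_natCast_atTop_atTop)) fun N => ?_
  calc ∫ t in (k : ℝ)..k + N, t ^ (-μ)
      ≤ ∑ j ∈ Finset.range N, ((j + k : ℕ) : ℝ) ^ (-μ) := by
        convert ((antitoneOn_rpow_neg (by linarith) hk').mono
          Icc_subset_Ici_self).integral_le_sum using 3 with j
        push_cast; ring
    _ ≤ hzeta μ k := (summable_hzeta_summand hμ k).sum_le_tsum _ fun _ _ => by positivity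

lemma hzeta_eq_rpow_add_succ (hμ : 1 < μ) (k : ℕ) :
    hzeta μ k = (k : ℝ) ^ (-μ) + hzeta μ (k + 1) := by
  rw [hzeta, (summable_hzeta_summand hμ k).tsum_eq_zero_add, hzeta, zero_add]
  congr 3 with j
  rw [add_right_comm, add_assoc]

lemma hzeta_le (hμ : 1 < μ) {k : ℕ} (hk : 0 < k) :
    hzeta μ k ≤ μ / (μ - 1) * (k : ℝ) ^ (1 - μ) := by
  have hk' : (1 : ℝ) ≤ k := by exact_mod_cast hk
  have hhead : (k : ℝ) ^ (-μ) ≤ (k : ℝ) ^ (1 - μ) :=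
    Real.rpow_le_rpow_of_exponent_le hk' (by linarith)
  calc hzeta μ k = (k : ℝ) ^ (-μ) + hzeta μ (k + 1) := hzeta_eq_rpow_add_succ hμ k
    _ ≤ (k : ℝ) ^ (1 - μ) + (k : ℝ) ^ (1 - μ) / (μ - 1) :=
        add_le_add hhead (hzeta_succ_le hμ hk)
    _ = μ / (μ - 1) * (k : ℝ) ^ (1 - μ) := by field_simp [(by linarith : μ - 1 ≠ 0)]; ring

lemma hzeta_isBigO (hμ : 1 < μ) : hzeta μ =O[atTop] fun k : ℕ => (k : ℝ) ^ (1 - μ) := by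
  refine IsBigO.of_bound (μ / (μ - 1)) ?_
  filter_upwards [eventually_gt_atTop 0] with k hk
  rw [Real.norm_of_nonneg (hzeta_nonneg k), Real.norm_of_nonneg (by positivity)]
  exact hzeta_le hμ hk

end

section
variable {lam s : ℝ}

lemma rpow_div_hzeta_le (hlam : 1 < lam) {n : ℕ} (hn : 0 < n) :
    (n : ℝ) ^ s / hzeta lam n ≤ (lam - 1) * (n : ℝ) ^ (-(1 - lam - s)) := by
  have hn' : (0 : ℝ) < n := by exact_mod_cast hn
  calc (n : ℝ) ^ s / hzeta lam n ≤ (n : ℝ) ^ s / ((n : ℝ) ^ (1 - lam) / (lam - 1)) :=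
        div_le_div_of_nonneg_left (by positivity)
          (div_pos (by positivity) (by linarith)) (rpow_div_le_hzeta hlam hn)
    _ = (lam - 1) * (n : ℝ) ^ (-(1 - lam - s)) := by
        rw [show -(1 - lam - s) = s - (1 - lam) by ring, Real.rpow_sub hn' s, div_div_eq_mul_div,
          mul_comm, mul_div_assoc]

lemma summable_rpow_div_hzeta (hlam : 1 < lam) (hs : s + lam < 0) {k : ℕ} (hk : 0 < k) :
    Summable fun n : ℕ => ((n + k : ℕ) : ℝ) ^ s / hzeta lam (n + k) :=
  Summable.of_nonneg_of_le (fun n => div_nonneg (by positivity) (hzeta_nonneg _))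
    (fun n => rpow_div_hzeta_le hlam (by omega))
    ((summable_hzeta_summand (by linarith) k).mul_left _)

lemma tsum_rpow_div_hzeta_le (hlam : 1 < lam) (hs : s + lam < 0) {k : ℕ} (hk : 0 < k) :
    ∑' n : ℕ, ((n + k : ℕ) : ℝ) ^ s / hzeta lam (n + k) ≤
      (lam - 1) * hzeta (1 - lam - s) k := by
  rw [hzeta, ← tsum_mul_left]
  exact (summable_rpow_div_hzeta hlam hs hk).tsum_le_tsum
    (fun n => rpow_div_hzeta_le hlam (by omega))
    ((summable_hzeta_summand (by linarith) k).mul_left _)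

lemma isBigO_tsum_rpow_div_hzeta (hlam : 1 < lam) (hs : s + lam < 0) :
    (fun k : ℕ => ∑' n : ℕ, ((n + k : ℕ) : ℝ) ^ s / hzeta lam (n + k))
      =O[atTop] fun k : ℕ => (k : ℝ) ^ (s + lam) := by
  rw [show s + lam = 1 - (1 - lam - s) by ring]
  refine (IsBigO.of_bound 1 ?_).trans
    ((hzeta_isBigO (μ := 1 - lam - s) (by linarith)).const_mul_left (lam - 1))
  filter_upwards [eventually_gt_atTop 0] with k hk
  rw [one_mul, Real.norm_of_nonneg (tsum_nonneg fun n => div_nonneg (by positivity)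
    (hzeta_nonneg _))]
  exact (tsum_rpow_div_hzeta_le hlam hs hk).trans (le_abs_self _)

end

theorem stmt9 (lam ρ : ℝ) (hlam : 1 < lam) (hρ : 2 * lam + 1 < ρ) :
    (∀ k : ℕ, 1 ≤ k →
        Summable (fun n : ℕ => ((n + k : ℕ) : ℝ) ^ ((1 - ρ) / 2) / hzeta lam (n + k))) ∧
      (fun k : ℕ =>
          hzeta lam k * ∑' n : ℕ, ((n + k : ℕ) : ℝ) ^ ((1 - ρ) / 2) / hzeta lam (n + k))
        =O[atTop] fun k : ℕ => (k : ℝ) ^ ((3 - ρ) / 2) := by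
  have hs : (1 - ρ) / 2 + lam < 0 := by linarith
  refine ⟨fun k hk => summable_rpow_div_hzeta hlam hs hk, ?_⟩
  refine ((hzeta_isBigO hlam).mul (isBigO_tsum_rpow_div_hzeta hlam hs)).trans_eventuallyEq ?_
  filter_upwards [eventually_gt_atTop 0] with k hk
  rw [← Real.rpow_add (by exact_mod_cast hk)]
  congr 1
  ring
end

section
/- Let (Y_n)_{n ≥ k−1} be a sequence of real random variables and L an independent integer-valued random variable with P(L ≥ n) > 0 for all n ≥ k. Suppose E[Y_n] = g_n for each n, g_n → f as n → ∞, and Σ_{n=k}^{∞} E[|Y_n − Y_{n−1}|]/P(L ≥ n) < ∞. Then the randomly truncated telescopic sum Ψ = Y_{k−1} + Σ_{n=k}^{L} (Y_n − Y_{n−1})/P(L ≥ n) satisfies E[Ψ] = f. -/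
/-!
Write `Ψ = Y (k - 1) + ∑' n, Z n` with `Z n = 1{k ≤ n ≤ L} (Y n - Y (n - 1)) / P(L ≥ n)`.
Independence of `L` and `Y` gives `E[Z n] = g n - g (n - 1)` for `n ≥ k`, and
`E|Z n| ≤ E|Y n - Y (n - 1)| / P(L ≥ n)` is summable, so expectation and summation commute;
the series of expectations telescopes to `f - g (k - 1)`.
-/

open MeasureTheory Filter Finset ProbabilityTheory Topology

theorem hasSum_ite_sub_of_tendsto {G : Type*} [AddCommGroup G] [TopologicalSpace G]
    [IsTopologicalAddGroup G] [T2Space G] {g : ℕ → G} {f : G}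
    (hg : Tendsto g atTop (𝓝 f)) (k : ℕ)
    (hs : Summable fun n => if k ≤ n then g n - g (n - 1) else 0) :
    HasSum (fun n => if k ≤ n then g n - g (n - 1) else 0) (f - g (k - 1)) := by
  have partial_sum : ∀ N, k ≤ N →
      ∑ n ∈ range N, (if k ≤ n then g n - g (n - 1) else 0) = g (N - 1) - g (k - 1) := by
    intro N hN
    induction N, hN using Nat.le_induction with
    | base => simp +contextual [not_le.2 (mem_range.1 _)]
    | succ N hkN ih => rw [sum_range_succ, ih, if_pos hkN, Nat.add_sub_cancel]; abel
  refine hs.hasSum_iff_tendsto_nat.2 ?_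
  refine ((hg.comp (tendsto_sub_atTop_nat 1)).sub_const _).congr' ?_
  filter_upwards [eventually_ge_atTop k] with N hN using (partial_sum N hN).symm

theorem integrable_tsum_of_summable_integral_norm {α E ι : Type*} [MeasurableSpace α]
    {μ : Measure α} [NormedAddCommGroup E] [CompleteSpace E] [Countable ι] {F : ι → α → E}
    (hF_int : ∀ i, Integrable (F i) μ) (hF_sum : Summable fun i ↦ ∫ a, ‖F i a‖ ∂μ) :
    Integrable (fun a ↦ ∑' i, F i a) μ := by
  have hL1 : ∑' i, ‖(hF_int i).toL1 (F i)‖ₑ ≠ ⊤ := by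
    refine tsum_enorm_ne_top_iff_summable_norm.2 ?_
    simpa [L1.norm_of_fun_eq_integral_norm] using hF_sum
  refine (L1.integrable_coeFn (∑' i, (hF_int i).toL1 (F i))).congr ?_
  filter_upwards [Lp.coeFn_tsum hL1, ae_all_iff.2 fun i => (hF_int i).coeFn_toL1] with a hsum hF
  rw [hsum]
  exact tsum_congr hF

theorem ProbabilityTheory.IndepFun.integral_indicator_preimage {Ω β : Type*} [MeasurableSpace Ω]
    [MeasurableSpace β] {μ : Measure Ω} {L : Ω → β} {X : Ω → ℝ} (hLX : IndepFun L X μ)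
    (hL : Measurable L) (hX : AEStronglyMeasurable X μ) {s : Set β} (hs : MeasurableSet s) :
    ∫ ω, (L ⁻¹' s).indicator X ω ∂μ = μ.real (L ⁻¹' s) * ∫ ω, X ω ∂μ := by
  have hind : IndepFun (s.indicator (1 : β → ℝ) ∘ L) X μ :=
    hLX.comp (measurable_one.indicator hs) measurable_id
  have hmeas : AEStronglyMeasurable (s.indicator (1 : β → ℝ) ∘ L) μ :=
    ((measurable_one.indicator hs).comp hL).aestronglyMeasurable
  have hsplit : (L ⁻¹' s).indicator X = (s.indicator 1 ∘ L) * X := by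
    ext ω; by_cases h : L ω ∈ s <;> simp [h]
  rw [hsplit, hind.integral_mul_eq_mul_integral hmeas hX, ← integral_indicator_one (hL hs)]
  rfl

section DebiasingTerm

variable {Ω : Type*} [MeasurableSpace Ω] {μ : Measure Ω} {Y : ℕ → Ω → ℝ} {L : Ω → ℕ} {k n : ℕ}

noncomputable def debiasingTerm (μ : Measure Ω) (Y : ℕ → Ω → ℝ) (L : Ω → ℕ) (k n : ℕ) (ω : Ω) :
    ℝ :=
  (Set.Icc k (L ω)).indicator (fun m => (Y m ω - Y (m - 1) ω) / μ.real {ω' | m ≤ L ω'}) n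

theorem sum_Icc_eq_tsum_debiasingTerm (ω : Ω) :
    ∑ n ∈ Icc k (L ω), (Y n ω - Y (n - 1) ω) / μ.real {ω' | n ≤ L ω'} =
      ∑' n, debiasingTerm μ Y L k n ω := by
  rw [sum_eq_tsum_indicator, coe_Icc]
  rfl

theorem debiasingTerm_of_lt (h : n < k) : debiasingTerm μ Y L k n = 0 := by
  ext ω
  simp [debiasingTerm, not_le.2 h]

theorem debiasingTerm_of_le (h : k ≤ n) :
    debiasingTerm μ Y L k n =
      (L ⁻¹' Set.Ici n).indicator fun ω => (Y n ω - Y (n - 1) ω) / μ.real {ω' | n ≤ L ω'} := by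
  ext ω
  by_cases hn : n ≤ L ω <;> simp [debiasingTerm, h, hn]

theorem integrable_debiasingTerm (hL : Measurable L) (hY : ∀ n, Integrable (Y n) μ) (k n : ℕ) :
    Integrable (debiasingTerm μ Y L k n) μ := by
  rcases lt_or_ge n k with h | h
  · simp [debiasingTerm_of_lt h]
  · rw [debiasingTerm_of_le h]
    exact (((hY n).sub (hY (n - 1))).div_const _).indicator (hL measurableSet_Ici)

theorem integral_norm_debiasingTerm_le (hL : Measurable L) (hY : ∀ n, Integrable (Y n) μ) :
    ∫ ω, ‖debiasingTerm μ Y L k n ω‖ ∂μ ≤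
      if k ≤ n then (∫ ω, |Y n ω - Y (n - 1) ω| ∂μ) / μ.real {ω | n ≤ L ω} else 0 := by
  rcases lt_or_ge n k with h | h
  · simp [debiasingTerm_of_lt h, not_le.2 h]
  · rw [if_pos h, ← integral_div]
    refine integral_mono (integrable_debiasingTerm hL hY k n).norm
      (((hY n).sub (hY (n - 1))).abs.div_const _) fun ω => ?_
    rw [debiasingTerm_of_le h, norm_indicator_eq_indicator_norm]
    refine (Set.indicator_le_self' (fun _ _ => norm_nonneg _) ω).trans_eq ?_
    rw [Real.norm_eq_abs, abs_div, abs_of_nonneg measureReal_nonneg]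

theorem integral_debiasingTerm (hL : Measurable L)
    (hindep : IndepFun L (fun ω n => Y n ω) μ) (hY : ∀ n, Integrable (Y n) μ)
    (hk : k ≤ n) (hpos : 0 < μ.real {ω | n ≤ L ω}) :
    ∫ ω, debiasingTerm μ Y L k n ω ∂μ = ∫ ω, Y n ω ∂μ - ∫ ω, Y (n - 1) ω ∂μ := by
  have hincr : IndepFun L (fun ω => (Y n ω - Y (n - 1) ω) / μ.real {ω' | n ≤ L ω'}) μ :=
    hindep.comp (φ := id) (ψ := fun y : ℕ → ℝ => (y n - y (n - 1)) / μ.real {ω' | n ≤ L ω'})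
      measurable_id (by fun_prop)
  rw [debiasingTerm_of_le hk, hincr.integral_indicator_preimage hL
    (((hY n).sub (hY (n - 1))).div_const _).aestronglyMeasurable measurableSet_Ici,
    integral_div, integral_sub (hY n) (hY (n - 1))]
  exact mul_div_cancel₀ _ hpos.ne'

end DebiasingTerm

theorem stmt11_general {Ω : Type*} [MeasurableSpace Ω] (μ : Measure Ω)
    (Y : ℕ → Ω → ℝ) (L : Ω → ℕ) (k : ℕ) (g : ℕ → ℝ) (f : ℝ)
    (hLmeas : Measurable L)
    (hindep : ProbabilityTheory.IndepFun L (fun ω n => Y n ω) μ)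
    (hpos : ∀ n, k ≤ n → 0 < (μ {ω | n ≤ L ω}).toReal)
    (hint : ∀ n, Integrable (Y n) μ)
    (hE : ∀ n, ∫ ω, Y n ω ∂μ = g n)
    (hlim : Tendsto g atTop (nhds f))
    (hsum : Summable (fun n : ℕ => if k ≤ n then
        (∫ ω, |Y n ω - Y (n - 1) ω| ∂μ) / (μ {ω | n ≤ L ω}).toReal else 0)) :
    ∫ ω, (Y (k - 1) ω + ∑ n ∈ Finset.Icc k (L ω),
        (Y n ω - Y (n - 1) ω) / (μ {ω' | n ≤ L ω'}).toReal) ∂μ = f := by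
  set Z := debiasingTerm μ Y L k
  have hZ_int : ∀ n, Integrable (Z n) μ := integrable_debiasingTerm hLmeas hint k
  have hZ_sum : Summable fun n => ∫ ω, ‖Z n ω‖ ∂μ :=
    hsum.of_nonneg_of_le (fun n => integral_nonneg fun ω => norm_nonneg _)
      fun n => integral_norm_debiasingTerm_le hLmeas hint
  have hZ_mean : (fun n => ∫ ω, Z n ω ∂μ) = fun n => if k ≤ n then g n - g (n - 1) else 0 := by
    ext n
    split_ifs with hk
    · rw [integral_debiasingTerm hLmeas hindep hint hk (hpos n hk), hE, hE]
    · simp [Z, debiasingTerm_of_lt (not_le.1 hk)]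
  have htelescope : HasSum (fun n => ∫ ω, Z n ω ∂μ) (f - g (k - 1)) := by
    have hsummable : Summable fun n => ∫ ω, Z n ω ∂μ :=
      hZ_sum.of_norm_bounded fun n => norm_integral_le_integral_norm _
    rw [hZ_mean] at hsummable ⊢
    exact hasSum_ite_sub_of_tendsto hlim k hsummable
  have hseries : ∫ ω, ∑' n, Z n ω ∂μ = f - g (k - 1) :=
    (hasSum_integral_of_summable_integral_norm hZ_int hZ_sum).unique htelescope
  simp_rw [← measureReal_def, sum_Icc_eq_tsum_debiasingTerm]
  rw [integral_add (hint _) (integrable_tsum_of_summable_integral_norm hZ_int hZ_sum), hseries,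
    hE]
  abel

theorem stmt11 {Ω : Type*} [MeasurableSpace Ω] (μ : Measure Ω) [IsProbabilityMeasure μ]
    (Y : ℕ → Ω → ℝ) (L : Ω → ℕ) (k : ℕ) (g : ℕ → ℝ) (f : ℝ)
    (hYmeas : ∀ n, Measurable (Y n)) (hLmeas : Measurable L)
    (hindep : ProbabilityTheory.IndepFun L (fun ω n => Y n ω) μ)
    (hpos : ∀ n, k ≤ n → 0 < (μ {ω | n ≤ L ω}).toReal)
    (hint : ∀ n, Integrable (Y n) μ)
    (hE : ∀ n, ∫ ω, Y n ω ∂μ = g n)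
    (hlim : Tendsto g atTop (nhds f))
    (hsum : Summable (fun n : ℕ => if k ≤ n then
        (∫ ω, |Y n ω - Y (n - 1) ω| ∂μ) / (μ {ω | n ≤ L ω}).toReal else 0)) :
    ∫ ω, (Y (k - 1) ω + ∑ n ∈ Finset.Icc k (L ω),
        (Y n ω - Y (n - 1) ω) / (μ {ω' | n ≤ L ω'}).toReal) ∂μ = f :=
  stmt11_general μ Y L k g f hLmeas hindep hpos hint hE hlim hsum
end

section
/- For integers 1 ≤ m ≤ n and 0 ≤ i ≤ m, the hypergeometric weights satisfy Σ_{i} [C(n−m, k−i)C(m, i)/C(n,k)]·[((m−i)/m)·c(i) + (i/m)·c(i−1)] = Σ_{i} [C(n−m+1, k−i)C(m−1, i)/C(n,k)]·c(i) for any coefficients c(i). -/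
open Finset

lemma aux1 (m i : ℕ) (hm : 1 ≤ m) :
    ((m : ℝ) - i) * (Nat.choose m i : ℝ) = (m : ℝ) * (Nat.choose (m - 1) i : ℝ) := by
  rcases le_or_gt i (m - 1) with h | h
  · have him : i ≤ m := le_trans h (Nat.sub_le _ _)
    have h1 : Nat.choose m (i+1) * (i+1) = Nat.choose m i * (m - i) :=
      Nat.choose_succ_right_eq m i
    have h2 : m * Nat.choose (m - 1) i = Nat.choose m (i+1) * (i+1) := by
      have := Nat.add_one_mul_choose_eq (m - 1) i
      simp only [Nat.succ_eq_add_one, Nat.sub_add_cancel hm] at this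
      exact this
    have h3 : Nat.choose m i * (m - i) = m * Nat.choose (m - 1) i := by omega
    have := congrArg (fun x : ℕ => (x : ℝ)) h3
    push_cast [Nat.cast_sub him] at this
    linarith [this]
  · have hmi : m ≤ i := by omega
    rcases eq_or_lt_of_le hmi with h' | h'
    · subst h'
      simp [Nat.choose_eq_zero_of_lt (by omega : m - 1 < m)]
    · rw [Nat.choose_eq_zero_of_lt h', Nat.choose_eq_zero_of_lt (by omega : m - 1 < i)]
      simp

lemma aux2 (m i : ℕ) (hm : 1 ≤ m) :
    ((i : ℝ) + 1) * (Nat.choose m (i+1) : ℝ) = (m : ℝ) * (Nat.choose (m - 1) i : ℝ) := by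
  have h2 : m * Nat.choose (m - 1) i = Nat.choose m (i+1) * (i+1) := by
    have := Nat.add_one_mul_choose_eq (m - 1) i
    simp only [Nat.succ_eq_add_one, Nat.sub_add_cancel hm] at this
    exact this
  have := congrArg (fun x : ℕ => (x : ℝ)) h2
  push_cast at this
  linarith

theorem stmt15 (n m k : ℕ) (hm : 1 ≤ m) (hmn : m ≤ n) (hk : k ≤ n) (c : ℕ → ℝ) :
    (∑ i ∈ range (k + 1),
        ((Nat.choose (n - m) (k - i) * Nat.choose m i : ℕ) : ℝ) / (Nat.choose n k : ℝ)
          * ((((m : ℝ) - i) / m) * c i + ((i : ℝ) / m) * c (i - 1)))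
      = ∑ i ∈ range (k + 1),
          ((Nat.choose (n - m + 1) (k - i) * Nat.choose (m - 1) i : ℕ) : ℝ)
            / (Nat.choose n k : ℝ) * c i := by
  have split : ∀ i, ((Nat.choose (n - m) (k - i) * Nat.choose m i : ℕ) : ℝ) / (Nat.choose n k : ℝ)
          * ((((m : ℝ) - i) / m) * c i + ((i : ℝ) / m) * c (i - 1))
      = ((Nat.choose (n - m) (k - i) * Nat.choose m i : ℕ) : ℝ) / (Nat.choose n k : ℝ)
          * ((((m : ℝ) - i) / m) * c i)
        + ((Nat.choose (n - m) (k - i) * Nat.choose m i : ℕ) : ℝ) / (Nat.choose n k : ℝ)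
          * (((i : ℝ) / m) * c (i - 1)) := fun i => by ring
  simp only [split]
  rw [Finset.sum_add_distrib]
  rw [Finset.sum_range_succ' (fun i => ((Nat.choose (n - m) (k - i) * Nat.choose m i : ℕ) : ℝ)
      / (Nat.choose n k : ℝ) * (((i : ℝ) / m) * c (i - 1)))]
  simp only [Nat.cast_zero, zero_div, zero_mul, mul_zero, add_zero]
  rw [Finset.sum_range_succ (fun i => ((Nat.choose (n - m) (k - i) * Nat.choose m i : ℕ) : ℝ)
      / (Nat.choose n k : ℝ) * ((((m : ℝ) - i) / m) * c i))]
  rw [Finset.sum_range_succ (fun i => ((Nat.choose (n - m + 1) (k - i) * Nat.choose (m - 1) i : ℕ) : ℝ)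
      / (Nat.choose n k : ℝ) * c i)]
  have top : ((Nat.choose (n - m) (k - k) * Nat.choose m k : ℕ) : ℝ) / (Nat.choose n k : ℝ)
        * ((((m : ℝ) - k) / m) * c k)
      = ((Nat.choose (n - m + 1) (k - k) * Nat.choose (m - 1) k : ℕ) : ℝ)
        / (Nat.choose n k : ℝ) * c k := by
    have hm0 : (m : ℝ) ≠ 0 := by positivity
    have h1 : ((m : ℝ) - k) * (Nat.choose m k : ℝ) / m = (Nat.choose (m - 1) k : ℝ) := by
      rw [aux1 m k hm]; field_simp
    simp only [Nat.sub_self, Nat.choose_zero_right, one_mul]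
    push_cast
    linear_combination (c k / ((Nat.choose n k : ℝ))) * h1
  have main : ∀ i ∈ range k,
      ((Nat.choose (n - m) (k - i) * Nat.choose m i : ℕ) : ℝ) / (Nat.choose n k : ℝ)
          * ((((m : ℝ) - i) / m) * c i)
        + ((Nat.choose (n - m) (k - (i+1)) * Nat.choose m (i+1) : ℕ) : ℝ)
            / (Nat.choose n k : ℝ) * ((((i+1 : ℕ) : ℝ)) / m * c (i + 1 - 1))
      = ((Nat.choose (n - m + 1) (k - i) * Nat.choose (m - 1) i : ℕ) : ℝ)
          / (Nat.choose n k : ℝ) * c i := by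
    intro i hi
    rw [Finset.mem_range] at hi
    have pascal : Nat.choose (n - m + 1) (k - i)
        = Nat.choose (n - m) (k - i - 1) + Nat.choose (n - m) (k - i) := by
      have h : k - i = (k - i - 1) + 1 := by omega
      have h2 := Nat.choose_succ_succ (n - m) (k - i - 1)
      simp only [Nat.succ_eq_add_one] at h2
      rw [← h] at h2
      exact h2
    have hk1 : k - (i + 1) = k - i - 1 := by omega
    have hm0 : (m : ℝ) ≠ 0 := by positivity
    have h1 : ((m : ℝ) - i) * (Nat.choose m i : ℝ) / m = (Nat.choose (m - 1) i : ℝ) := by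
      rw [aux1 m i hm]; field_simp
    have h2 : ((i : ℝ) + 1) * (Nat.choose m (i+1) : ℝ) / m = (Nat.choose (m - 1) i : ℝ) := by
      rw [aux2 m i hm]; field_simp
    simp only [Nat.add_sub_cancel, hk1, pascal]
    push_cast
    linear_combination ((Nat.choose (n - m) (k - i) : ℝ) * c i / ((Nat.choose n k : ℝ))) * h1
      + ((Nat.choose (n - m) (k - i - 1) : ℝ) * c i / ((Nat.choose n k : ℝ))) * h2
  have hsum : (∑ i ∈ range k, ((Nat.choose (n - m) (k - i) * Nat.choose m i : ℕ) : ℝ)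
          / (Nat.choose n k : ℝ) * ((((m : ℝ) - i) / m) * c i))
        + ∑ i ∈ range k, ((Nat.choose (n - m) (k - (i+1)) * Nat.choose m (i+1) : ℕ) : ℝ)
            / (Nat.choose n k : ℝ) * ((((i+1 : ℕ) : ℝ)) / m * c (i + 1 - 1))
      = ∑ i ∈ range k, ((Nat.choose (n - m + 1) (k - i) * Nat.choose (m - 1) i : ℕ) : ℝ)
          / (Nat.choose n k : ℝ) * c i := by
    rw [← Finset.sum_add_distrib]
    exact Finset.sum_congr rfl main
  linarith [hsum, top]
end
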